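/- Let H ∈ (0,1) and θ = 1. Then lim_{t→∞} e^{−2t} ∫₀^t ∫₀^t e^{u+v} · H(2H−1)|u−v|^{2H−2} du dv = H Γ(2H) when H > 1/2; more generally, for the OU process η_t = ∫₀^t e^{−(t−u)} dB^H_u driven by fractional Brownian motion, lim_{t→∞} E[η_t²] = H Γ(2H) θ^{−2H} (with θ = 1, this is HΓ(2H)). -/

import Mathlib

open Real Filter intervalIntegral MeasureTheory Set Topology

/-!
With `Φₐ(t) = ∫₀ᵗ e^{a s} s^p ds` and `p = 2H - 2 > -1`, splitting the inner integral at `v = u`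
gives `∫₀ᵗ e^{u+v} |u - v|^p dv = e^{2u} (Φ₋₁(u) + Φ₁(t - u))`, and both outer integrals have
explicit primitives, so the double integral equals `e^{2t} Φ₋₁(t) - Φ₁(t)`. After multiplying by
`e^{-2t}`, the first term tends to `Γ(p + 1)` and the second is at most `e^{-t} t^{p+1} / (p + 1)`.
Finally `H (2H - 1) Γ(2H - 1) = H Γ(2H)`.
-/

noncomputable def expRpowIntegral (a p t : ℝ) : ℝ := ∫ s in (0:ℝ)..t, exp (a * s) * s ^ p

section
variable {a p : ℝ}

lemma intervalIntegrable_abs_rpow (hp : -1 < p) (x y : ℝ) :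
    IntervalIntegrable (fun s : ℝ => |s| ^ p) volume x y := by
  have of_nonneg : ∀ c : ℝ, 0 ≤ c → IntervalIntegrable (fun s : ℝ => |s| ^ p) volume 0 c :=
    fun c hc => (intervalIntegrable_congr fun s hs => by
      rw [uIoc_of_le hc] at hs; simp [abs_of_pos hs.1]).mp (intervalIntegrable_rpow' hp)
  have from_zero : ∀ c : ℝ, IntervalIntegrable (fun s : ℝ => |s| ^ p) volume 0 c := by
    intro c
    rcases le_total 0 c with hc | hc
    · exact of_nonneg c hc
    · simpa using (of_nonneg (-c) (neg_nonneg.2 hc)).comp_sub_left 0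
  exact (from_zero x).symm.trans (from_zero y)

lemma intervalIntegrable_exp_mul_rpow (hp : -1 < p) (a x y : ℝ) :
    IntervalIntegrable (fun s : ℝ => exp (a * s) * s ^ p) volume x y :=
  (intervalIntegrable_rpow' hp).continuousOn_mul (by fun_prop)

lemma continuous_expRpowIntegral (hp : -1 < p) (a : ℝ) : Continuous (expRpowIntegral a p) :=
  continuous_primitive (intervalIntegrable_exp_mul_rpow hp a) 0

lemma hasDerivAt_expRpowIntegral (hp : -1 < p) (a : ℝ) {x : ℝ} (hx : 0 < x) :
    HasDerivAt (expRpowIntegral a p) (exp (a * x) * x ^ p) x :=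
  integral_hasDerivAt_right (intervalIntegrable_exp_mul_rpow hp a 0 x)
    (Measurable.stronglyMeasurable (by fun_prop)).stronglyMeasurableAtFilter
    ((continuous_exp.comp (continuous_const_mul a)).continuousAt.mul
      (continuousAt_rpow_const x p (Or.inl hx.ne')))

lemma integral_exp_mul_expRpowIntegral (hp : -1 < p) (ha : a ≠ 0) {t : ℝ} (ht : 0 ≤ t) :
    ∫ u in (0:ℝ)..t, exp (-2 * a * u) * expRpowIntegral a p u
      = (expRpowIntegral (-a) p t - exp (-2 * a * t) * expRpowIntegral a p t) / (2 * a) := by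
  set F : ℝ → ℝ := fun u => (expRpowIntegral (-a) p u - exp (-2 * a * u) * expRpowIntegral a p u)
    / (2 * a)
  have hF0 : F 0 = 0 := by simp [F, expRpowIntegral]
  have hcont : Continuous fun u => exp (-2 * a * u) * expRpowIntegral a p u :=
    (by fun_prop : Continuous fun u : ℝ => exp (-2 * a * u)).mul (continuous_expRpowIntegral hp a)
  have hderiv : ∀ x ∈ Ioo 0 t, HasDerivAt F (exp (-2 * a * x) * expRpowIntegral a p x) x := by
    intro x hx
    have hexp : HasDerivAt (fun u : ℝ => exp (-2 * a * u)) (exp (-2 * a * x) * (-2 * a)) x := by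
      simpa using ((hasDerivAt_id x).const_mul (-2 * a)).exp
    have hcancel : exp (-2 * a * x) * exp (a * x) = exp (-a * x) := by
      rw [← exp_add]; ring_nf
    refine (((hasDerivAt_expRpowIntegral hp (-a) hx.1).sub
      (hexp.mul (hasDerivAt_expRpowIntegral hp a hx.1))).div_const (2 * a)).congr_deriv ?_
    rw [div_eq_iff (mul_ne_zero two_ne_zero ha)]
    linear_combination (-x ^ p) * hcancel
  rw [integral_eq_sub_of_hasDeriv_right_of_le (f := F) ht
    (((continuous_expRpowIntegral hp (-a)).sub hcont).div_const _).continuousOn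
    (fun x hx => (hderiv x hx).hasDerivWithinAt) (hcont.intervalIntegrable 0 t), hF0, sub_zero]

lemma integral_exp_add_mul_abs_sub_rpow (hp : -1 < p) {t u : ℝ} (hu : u ∈ Icc 0 t) :
    ∫ v in (0:ℝ)..t, exp (u + v) * |u - v| ^ p
      = exp (2 * u) * (expRpowIntegral (-1) p u + expRpowIntegral 1 p (t - u)) := by
  obtain ⟨hu0, hut⟩ := hu
  have hint : ∀ x y, IntervalIntegrable (fun v => exp (u + v) * |u - v| ^ p) volume x y := by
    intro x y
    have habs : IntervalIntegrable (fun v => |u - v| ^ p) volume x y := by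
      simpa using (intervalIntegrable_abs_rpow hp (u - x) (u - y)).comp_sub_left u
    exact habs.continuousOn_mul (by fun_prop)
  have left : ∫ v in (0:ℝ)..u, exp (u + v) * |u - v| ^ p
      = exp (2 * u) * expRpowIntegral (-1) p u := by
    rw [integral_congr (g := fun v => exp (2 * u) * (exp (-1 * (u - v)) * (u - v) ^ p)),
      integral_comp_sub_left (fun s => exp (2 * u) * (exp (-1 * s) * s ^ p)),
      intervalIntegral.integral_const_mul]
    · simp [expRpowIntegral]
    intro v hv
    rw [uIcc_of_le hu0] at hv
    simp only [abs_of_nonneg (sub_nonneg.2 hv.2), ← mul_assoc, ← exp_add]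
    ring_nf
  have right : ∫ v in u..t, exp (u + v) * |u - v| ^ p
      = exp (2 * u) * expRpowIntegral 1 p (t - u) := by
    rw [integral_congr (g := fun v => exp (2 * u) * (exp (1 * (v - u)) * (v - u) ^ p)),
      integral_comp_sub_right (fun s => exp (2 * u) * (exp (1 * s) * s ^ p)),
      intervalIntegral.integral_const_mul]
    · simp [expRpowIntegral]
    intro v hv
    rw [uIcc_of_le hut] at hv
    simp only [abs_sub_comm u v, abs_of_nonneg (sub_nonneg.2 hv.1), ← mul_assoc, ← exp_add]
    ring_nf
  rw [← integral_add_adjacent_intervals (hint 0 u) (hint u t), left, right, mul_add]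

lemma integral_integral_exp_add_mul_abs_sub_rpow (hp : -1 < p) {t : ℝ} (ht : 0 ≤ t) :
    ∫ u in (0:ℝ)..t, ∫ v in (0:ℝ)..t, exp (u + v) * |u - v| ^ p
      = exp (2 * t) * expRpowIntegral (-1) p t - expRpowIntegral 1 p t := by
  have hcont : ∀ a, Continuous (expRpowIntegral a p) := continuous_expRpowIntegral hp
  have left : ∫ u in (0:ℝ)..t, exp (2 * u) * expRpowIntegral (-1) p u
      = (expRpowIntegral 1 p t - exp (2 * t) * expRpowIntegral (-1) p t) / -2 := by
    simpa using integral_exp_mul_expRpowIntegral hp (a := -1) (by norm_num) ht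
  have reflect : ∫ u in (0:ℝ)..t, exp (2 * u) * expRpowIntegral 1 p (t - u)
      = exp (2 * t) * ∫ s in (0:ℝ)..t, exp (-2 * 1 * s) * expRpowIntegral 1 p s := by
    rw [← intervalIntegral.integral_const_mul, integral_congr
      (g := fun u => exp (2 * t) * (exp (-2 * 1 * (t - u)) * expRpowIntegral 1 p (t - u))),
      integral_comp_sub_left (fun s => exp (2 * t) * (exp (-2 * 1 * s) * expRpowIntegral 1 p s)),
      sub_self, sub_zero]
    intro u _
    simp only [← mul_assoc, ← exp_add]
    ring_nf
  rw [integral_congr fun u hu => integral_exp_add_mul_abs_sub_rpow hp (uIcc_of_le ht ▸ hu)]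
  simp only [mul_add]
  rw [intervalIntegral.integral_add (Continuous.intervalIntegrable (by fun_prop) 0 t)
    (Continuous.intervalIntegrable (by fun_prop) 0 t), left, reflect,
    integral_exp_mul_expRpowIntegral hp one_ne_zero ht]
  have hcancel : exp (2 * t) * exp (-2 * 1 * t) = 1 := by rw [← exp_add]; norm_num
  linear_combination (-expRpowIntegral 1 p t / 2) * hcancel

lemma tendsto_expRpowIntegral_neg_one_atTop (hp : -1 < p) :
    Tendsto (expRpowIntegral (-1) p) atTop (𝓝 (Gamma (p + 1))) := by
  have hs : 0 < p + 1 := by linarith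
  have hint := GammaIntegral_convergent hs
  rw [Gamma_eq_integral hs]
  simp only [add_sub_cancel_right] at hint ⊢
  unfold expRpowIntegral
  simp only [neg_one_mul]
  exact intervalIntegral_tendsto_integral_Ioi 0 hint tendsto_id

lemma tendsto_exp_neg_two_mul_expRpowIntegral_one_atTop (hp : -1 < p) :
    Tendsto (fun t => exp (-2 * t) * expRpowIntegral 1 p t) atTop (𝓝 0) := by
  have hp1 : 0 < p + 1 := by linarith
  have hbound : Tendsto (fun t : ℝ => t ^ (p + 1) * exp (-1 * t) / (p + 1)) atTop (𝓝 0) := by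
    simpa using (tendsto_rpow_mul_exp_neg_mul_atTop_nhds_zero (p + 1) 1 one_pos).div_const (p + 1)
  refine squeeze_zero' ?_ ?_ hbound
  · filter_upwards [eventually_ge_atTop 0] with t ht
    exact mul_nonneg (exp_pos _).le (integral_nonneg ht fun s hs =>
      mul_nonneg (exp_pos _).le (rpow_nonneg hs.1 _))
  · filter_upwards [eventually_ge_atTop 0] with t ht
    have hle : expRpowIntegral 1 p t ≤ ∫ s in (0:ℝ)..t, exp t * s ^ p :=
      integral_mono_on ht (intervalIntegrable_exp_mul_rpow hp 1 0 t)
        ((intervalIntegrable_rpow' hp).const_mul _) fun s hs =>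
          mul_le_mul_of_nonneg_right (by simpa using hs.2) (rpow_nonneg hs.1 _)
    rw [intervalIntegral.integral_const_mul, integral_rpow (Or.inl hp),
      zero_rpow hp1.ne', sub_zero] at hle
    calc exp (-2 * t) * expRpowIntegral 1 p t
        ≤ exp (-2 * t) * (exp t * (t ^ (p + 1) / (p + 1))) :=
          mul_le_mul_of_nonneg_left hle (exp_pos _).le
      _ = t ^ (p + 1) * exp (-1 * t) / (p + 1) := by
          rw [← mul_assoc, ← exp_add]; ring_nf

lemma tendsto_exp_neg_two_mul_integral_integral_exp_add_mul_abs_sub_rpow (hp : -1 < p) :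
    Tendsto (fun t => exp (-2 * t) *
        ∫ u in (0:ℝ)..t, ∫ v in (0:ℝ)..t, exp (u + v) * |u - v| ^ p)
      atTop (𝓝 (Gamma (p + 1))) := by
  have hlim := (tendsto_expRpowIntegral_neg_one_atTop hp).sub
    (tendsto_exp_neg_two_mul_expRpowIntegral_one_atTop hp)
  rw [sub_zero] at hlim
  refine hlim.congr' ?_
  filter_upwards [eventually_ge_atTop 0] with t ht
  rw [integral_integral_exp_add_mul_abs_sub_rpow hp ht, mul_sub, ← mul_assoc, ← exp_add]
  norm_num

end

theorem stmt_18_general (H : ℝ) (hH2 : 1/2 < H) :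
    Tendsto (fun t : ℝ =>
        Real.exp (-2*t) * ∫ u in (0:ℝ)..t, ∫ v in (0:ℝ)..t,
          Real.exp (u + v) * (H * (2*H - 1) * |u - v| ^ (2*H - 2)))
      atTop (nhds (H * Real.Gamma (2*H))) := by
  have hp : -1 < 2 * H - 2 := by linarith
  have hGamma : H * (2 * H - 1) * Gamma (2 * H - 2 + 1) = H * Gamma (2 * H) := by
    rw [show 2 * H - 2 + 1 = 2 * H - 1 by ring, mul_assoc, ← Gamma_add_one (by linarith),
      sub_add_cancel]
  rw [← hGamma]
  refine ((tendsto_exp_neg_two_mul_integral_integral_exp_add_mul_abs_sub_rpow hp).const_mul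
    (H * (2 * H - 1))).congr fun t => ?_
  simp only [mul_left_comm _ (H * (2 * H - 1)), intervalIntegral.integral_const_mul]

theorem stmt_18 (H : ℝ) (hH : H ∈ Set.Ioo (0:ℝ) 1) (hH2 : 1/2 < H) :
    Tendsto (fun t : ℝ =>
        Real.exp (-2*t) * ∫ u in (0:ℝ)..t, ∫ v in (0:ℝ)..t,
          Real.exp (u + v) * (H * (2*H - 1) * |u - v| ^ (2*H - 2)))
      atTop (nhds (H * Real.Gamma (2*H))) :=
  stmt_18_general H hH2
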